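/- arXiv:1207.3133 — 2 statements merged into one kernel-verified Lean document; each statement's English description precedes it below -/
import Mathlib

section
/- Let q be a prime power, m a positive integer, B = {α₁,...,α_m} a basis of F_{q^m} over F_q, and B' = {β₁,...,β_m} its dual basis with respect to the trace form (i.e., Tr_{F_{q^m}/F_q}(α_i β_j) = 1 if i = j and 0 otherwise). Let Φ_B : F_{q^m}^n → F_q^{mn} be the F_q-linear map expanding each coordinate in the basis B, and Φ_{B'} the analogous map for B'. Then for any F_{q^m}-linear code C ⊆ F_{q^m}^n, the image of the (Euclidean) dual code satisfies Φ_{B'}(C^⊥) = (Φ_B(C))^⊥, where the dual on the right is taken with respect to the standard bilinear form on F_q^{mn}. -/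
/-- The Euclidean dual of a (not necessarily linear) code, as a set. -/
def dualCode {F ι : Type*} [Field F] [Fintype ι] (C : Set (ι → F)) : Set (ι → F) :=
  {y | ∀ x ∈ C, ∑ i, x i * y i = 0}

/-- Coordinatewise expansion of vectors over `L` into vectors over `K` with
respect to a basis `B` of `L` over `K`. -/
noncomputable def expand {K L : Type*} [Field K] [Field L] [Algebra K L] {m n : ℕ}
    (B : Module.Basis (Fin m) K L) (x : Fin n → L) : Fin n × Fin m → K :=
  fun p => B.repr (x p.1) p.2

/-!
The trace duality `Tr(αᵢ βⱼ) = δᵢⱼ` says that the `B'`-coordinates of `b` are `Tr(αⱼ b)`, so the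
standard inner product of `Φ_B(x)` and `Φ_{B'}(y)` is `Tr(∑ xᵢ yᵢ)`. This gives
`(Φ_B C)^⊥ = Φ_{B'}{y | ∀ x ∈ C, Tr(x · y) = 0}`, and for an `L`-linear code `C` the condition
`Tr(x · y) = 0` for all `x ∈ C` already forces `x · y = 0`, because `C` is stable under scaling
by `L` and an element `s` with `Tr(c s) = 0` for all `c` has all `B'`-coordinates zero.
-/

namespace Module.Basis

variable {ι K L : Type*} [Fintype ι] [DecidableEq ι] [CommRing K] [CommRing L] [Algebra K L]
  (B B' : Basis ι K L)

theorem repr_apply_eq_trace_mul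
    (hdual : ∀ i j, Algebra.trace K L (B i * B' j) = if i = j then 1 else 0) (b : L) (j : ι) :
    B'.repr b j = Algebra.trace K L (B j * b) := by
  nth_rw 2 [← B'.sum_repr b]
  simp only [Finset.mul_sum, mul_smul_comm, map_sum, map_smul, hdual, smul_eq_mul, mul_ite,
    mul_one, mul_zero, Finset.sum_ite_eq, Finset.mem_univ, if_true]

theorem sum_repr_mul_repr_eq_trace
    (hdual : ∀ i j, Algebra.trace K L (B i * B' j) = if i = j then 1 else 0) (a b : L) :
    ∑ j, B.repr a j * B'.repr b j = Algebra.trace K L (a * b) := by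
  nth_rw 2 [← B.sum_repr a]
  simp only [repr_apply_eq_trace_mul B B' hdual, Finset.sum_mul, smul_mul_assoc, map_sum, map_smul,
    smul_eq_mul]

theorem eq_zero_of_forall_trace_mul_eq_zero
    (hdual : ∀ i j, Algebra.trace K L (B i * B' j) = if i = j then 1 else 0) {s : L}
    (hs : ∀ c, Algebra.trace K L (c * s) = 0) : s = 0 :=
  B'.ext_elem fun j => by simp [repr_apply_eq_trace_mul B B' hdual, hs]

end Module.Basis

section Expand

variable {K L : Type*} [Field K] [Field L] [Algebra K L] {m n : ℕ}

theorem expand_bijective (B : Module.Basis (Fin m) K L) :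
    Function.Bijective (expand (n := n) B) := by
  refine ⟨fun x y h => funext fun i => B.ext_elem fun j => congrFun h (i, j), fun z => ?_⟩
  refine ⟨fun i => B.equivFun.symm fun j => z (i, j), funext fun p => ?_⟩
  exact congrFun (B.equivFun.apply_symm_apply _) p.2

theorem sum_expand_mul_expand (B B' : Module.Basis (Fin m) K L)
    (hdual : ∀ i j, Algebra.trace K L (B i * B' j) = if i = j then 1 else 0)
    (x y : Fin n → L) :
    ∑ p, expand B x p * expand B' y p = Algebra.trace K L (∑ i, x i * y i) := by
  simp only [expand, Fintype.sum_prod_type, map_sum, B.sum_repr_mul_repr_eq_trace B' hdual]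

end Expand

theorem mem_dualCode_iff_forall_trace_eq_zero {ι κ K L : Type*} [Fintype ι] [Fintype κ]
    [DecidableEq κ] [Field K] [Field L] [Algebra K L] (B B' : Module.Basis κ K L)
    (hdual : ∀ i j, Algebra.trace K L (B i * B' j) = if i = j then 1 else 0)
    (C : Submodule L (ι → L)) (y : ι → L) :
    y ∈ dualCode (C : Set (ι → L)) ↔ ∀ x ∈ C, Algebra.trace K L (∑ i, x i * y i) = 0 := by
  refine ⟨fun hy x hx => by rw [hy x hx, map_zero], fun hy x hx => ?_⟩
  refine B.eq_zero_of_forall_trace_mul_eq_zero B' hdual fun c => ?_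
  simpa [Finset.mul_sum, mul_assoc] using hy (c • x) (C.smul_mem c hx)

theorem stmt0_general (m n : ℕ)
    (K L : Type) [Field K] [Field L] [Algebra K L]
    (B B' : Module.Basis (Fin m) K L)
    (hdual : ∀ i j, Algebra.trace K L (B i * B' j) = if i = j then 1 else 0)
    (C : Submodule L (Fin n → L)) :
    expand B' '' dualCode (C : Set (Fin n → L)) = dualCode (expand B '' (C : Set (Fin n → L))) := by
  ext z
  obtain ⟨y, rfl⟩ := (expand_bijective B').2 z
  rw [(expand_bijective B').1.mem_set_image,
    mem_dualCode_iff_forall_trace_eq_zero B B' hdual]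
  simp only [dualCode, Set.mem_ofPred_eq, Set.forall_mem_image, SetLike.mem_coe,
    sum_expand_mul_expand B B' hdual]

/-- if `B'` is the trace-dual basis of `B`, then for any `L`-linear
code `C`, `Φ_{B'}(C^⊥) = (Φ_B C)^⊥`. -/
theorem stmt0 (p e m n : ℕ) (hp : p.Prime) (he : 0 < e) (hm : 0 < m)
    (K L : Type) [Field K] [Field L] [Fintype K] [Fintype L] [Algebra K L]
    (hcard : Fintype.card K = p ^ e) (hdim : Module.finrank K L = m)
    (B B' : Module.Basis (Fin m) K L)
    (hdual : ∀ i j, Algebra.trace K L (B i * B' j) = if i = j then 1 else 0)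
    (C : Submodule L (Fin n → L)) :
    expand B' '' dualCode (C : Set (Fin n → L)) = dualCode (expand B '' (C : Set (Fin n → L))) :=
  stmt0_general m n K L B B' hdual C
end

section
/- Seroussi–Lempel theorem (statement): the field extension F_{q^m}/F_q admits a self-dual basis with respect to the trace form if and only if q is even, or both q and m are odd. -/
/-!
A self-dual basis is an orthonormal basis for the trace form `(x, y) ↦ Tr(x y)`, a nondegenerate
symmetric bilinear form on `L = 𝔽_{q^m}` over `K = 𝔽_q`.

If `q` is even, `Tr(x²) = Tr(x)²`, so the form is not alternating. Splitting off a vector `u` with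
`Tr u = 1`, chosen so that the trace does not vanish on `u^⊥`, gives an orthonormal basis by
induction on the dimension.

If `q` is odd, the square class of the Gram determinant does not depend on the basis. For a power
basis it is `δ²`, where `δ` is the Vandermonde determinant of the conjugates `α ^ q ^ k`. Frobenius
permutes these conjugates by an `m`-cycle, so `δ ^ q = (-1) ^ (m - 1) * δ`, and hence the
discriminant is a square iff `m` is odd. Conversely, over a finite field of odd characteristic,
every nondegenerate form of dimension at least `2` represents `1`, so the form has an orthogonal
basis with Gram matrix `diag(1, …, 1, d)`. Then `d` is a square when the discriminant is.
-/

open Module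
open LinearMap (BilinForm)

theorem FiniteField.exists_mul_sq_add_mul_sq_eq_one {K : Type*} [Field K] [Fintype K]
    (hK : ringChar K ≠ 2) {a b : K} (ha : a ≠ 0) (hb : b ≠ 0) :
    ∃ x y : K, a * x ^ 2 + b * y ^ 2 = 1 := by
  open Polynomial in
  have hf : (C a * X ^ 2 : K[X]).degree = 2 := degree_C_mul_X_pow 2 ha
  have hg : (C b * X ^ 2 - C 1 : K[X]).degree = 2 := by
    rw [degree_sub_eq_left_of_degree_lt] <;> rw [degree_C_mul_X_pow 2 hb]
    · rfl
    · rw [degree_C one_ne_zero]; decide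
  obtain ⟨x, y, hxy⟩ := exists_root_sum_quadratic hf hg (odd_card_of_char_ne_two hK)
  refine ⟨x, y, ?_⟩
  simp only [eval_sub, eval_mul, eval_pow, eval_C, eval_X] at hxy
  linear_combination hxy

namespace LinearMap.BilinForm

variable {K V : Type*} [Field K] [AddCommGroup V] [Module K V] {B : BilinForm K V}

def IsOrthonormal {ι : Type*} (B : BilinForm K V) (v : ι → V) : Prop :=
  B.iIsOrtho v ∧ ∀ i, B (v i) (v i) = 1

theorem isOrthonormal_iff_apply_eq_ite {ι : Type*} [DecidableEq ι] {v : ι → V} :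
    B.IsOrthonormal v ↔ ∀ i j, B (v i) (v j) = if i = j then 1 else 0 := by
  refine ⟨fun ⟨ho, hn⟩ i j => ?_, fun h => ⟨fun i j hij => by simpa [hij] using h i j,
    fun i => by simpa using h i i⟩⟩
  split_ifs with hij
  · exact hij ▸ hn i
  · exact ho hij

theorem IsOrthonormal.exists_basis {ι : Type*} [Fintype ι] [FiniteDimensional K V] {v : ι → V}
    (hv : B.IsOrthonormal v) (hcard : Fintype.card ι = finrank K V) :
    ∃ b : Basis ι K V, B.IsOrthonormal b := by
  have hli : LinearIndependent K v := linearIndependent_of_iIsOrtho hv.1 (by simp [hv.2])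
  exact ⟨basisOfLinearIndependentOfCardEqFinrank' v hli hcard, by simpa using hv⟩

theorem finrank_orthogonal_span_singleton_add_one [FiniteDimensional K V] {u : V}
    (hu : B u u ≠ 0) : finrank K (B.orthogonal (K ∙ u)) + 1 = finrank K V := by
  rw [← Submodule.finrank_add_eq_of_isCompl (isCompl_span_singleton_orthogonal hu),
    finrank_span_singleton (fun h => hu (by simp [h])), add_comm]

theorem iIsOrtho_cons (hB : B.IsRefl) (u : V) {n : ℕ} {w : Fin n → B.orthogonal (K ∙ u)}
    (hw : (B.restrict _).iIsOrtho w) :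
    B.iIsOrtho (Fin.cons u fun i => (w i : V) : Fin (n + 1) → V) := by
  have hu : ∀ i, B u (w i) = 0 := fun i => (w i).2 u (Submodule.mem_span_singleton_self u)
  rw [iIsOrtho_def]
  intro i j hij
  induction i using Fin.cases <;> induction j using Fin.cases
  · exact absurd rfl hij
  · exact hu _
  · exact hB _ _ (hu _)
  · exact hw (Fin.succ_injective _ |>.ne_iff.mp hij)

theorem IsOrthonormal.cons (hB : B.IsRefl) {u : V} (hu : B u u = 1) {n : ℕ}
    {w : Fin n → B.orthogonal (K ∙ u)} (hw : (B.restrict _).IsOrthonormal w) :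
    B.IsOrthonormal (Fin.cons u fun i => (w i : V) : Fin (n + 1) → V) := by
  refine ⟨iIsOrtho_cons hB u hw.1, fun i => ?_⟩
  induction i using Fin.cases
  · simpa using hu
  · simpa using hw.2 _

theorem exists_apply_eq_one_and_ne_zero_on_orthogonal [FiniteDimensional K V]
    (hnd : B.Nondegenerate) {ℓ : V →ₗ[K] K} (hℓ : ∀ x, B x x = ℓ x ^ 2) (hℓ0 : ℓ ≠ 0)
    (h2 : 2 ≤ finrank K V) : ∃ u, ℓ u = 1 ∧ ∃ z ∈ B.orthogonal (K ∙ u), ℓ z ≠ 0 := by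
  -- Otherwise `B u = ℓ` whenever `ℓ u = 1`; two such `u` differing by `y ∈ ker ℓ` force `B y = 0`.
  by_contra! h
  have key : ∀ u, ℓ u = 1 → ∀ x, B u x = ℓ x := by
    intro u hu x
    have hmem : x - B u x • u ∈ B.orthogonal (K ∙ u) := by
      rw [mem_orthogonal_iff]
      intro _ hn
      obtain ⟨c, rfl⟩ := Submodule.mem_span_singleton.mp hn
      simp [hℓ, hu]
    have := h u hu _ hmem
    rwa [map_sub, map_smul, hu, smul_eq_mul, mul_one, sub_eq_zero, eq_comm] at this
  obtain ⟨u, hu⟩ := LinearMap.surjective hℓ0 1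
  obtain ⟨y, hy, hy0⟩ : ∃ y ∈ LinearMap.ker ℓ, y ≠ 0 := by
    refine Submodule.exists_mem_ne_zero_of_ne_bot fun hbot => ?_
    have := Dual.finrank_ker_add_one_of_ne_zero hℓ0
    rw [hbot, finrank_bot] at this
    omega
  refine hy0 (hnd.1 y fun x => ?_)
  have := key (u + y) (by simp_all) x
  rwa [map_add, LinearMap.add_apply, key u hu, add_eq_left] at this

theorem exists_isOrthonormal_of_apply_self_eq_sq [FiniteDimensional K V] (hB : B.IsSymm)
    (hnd : B.Nondegenerate) {ℓ : V →ₗ[K] K} (hℓ : ∀ x, B x x = ℓ x ^ 2) (hℓ0 : ℓ ≠ 0) :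
    ∃ v : Fin (finrank K V) → V, B.IsOrthonormal v := by
  obtain ⟨n, hn⟩ : ∃ n, finrank K V = n + 1 := by
    obtain ⟨u, hu⟩ := LinearMap.surjective hℓ0 1
    refine Nat.exists_eq_add_one.mpr (finrank_pos_iff_exists_ne_zero.mpr ⟨u, fun h => ?_⟩)
    simp [h] at hu
  rw [hn]
  induction n generalizing V with
  | zero =>
    obtain ⟨u, hu⟩ := LinearMap.surjective hℓ0 1
    refine ⟨fun _ => u, fun i j h => (h (Subsingleton.elim (α := Fin 1) i j)).elim, fun _ => ?_⟩
    rw [hℓ, hu, one_pow]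
  | succ n ih =>
    obtain ⟨u, hu, z, hz, hℓz⟩ :=
      exists_apply_eq_one_and_ne_zero_on_orthogonal hnd hℓ hℓ0 (by omega)
    have huu : B u u = 1 := by rw [hℓ, hu, one_pow]
    have hW := finrank_orthogonal_span_singleton_add_one (huu ▸ one_ne_zero : B u u ≠ 0)
    obtain ⟨w, hw⟩ := ih (hB.restrict _)
      (restrict_nondegenerate_orthogonal_spanSingleton B hnd hB.isRefl (huu ▸ one_ne_zero))
      (ℓ := ℓ ∘ₗ Submodule.subtype _) (fun x => hℓ x)
      (fun h => hℓz (LinearMap.congr_fun h ⟨z, hz⟩)) (by omega)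
    exact ⟨_, hw.cons hB.isRefl huu⟩

section Discriminant

variable {ι κ : Type*} [Fintype ι] [DecidableEq ι] [Fintype κ] [DecidableEq κ]

theorem toMatrix_reindex (b : Basis ι K V) (e : ι ≃ κ) :
    toMatrix (b.reindex e) B = (toMatrix b B).submatrix e.symm e.symm := by
  ext i j
  simp [toMatrix_apply]

theorem isSquare_det_toMatrix_iff (b : Basis ι K V) (c : Basis κ K V) :
    IsSquare (toMatrix b B).det ↔ IsSquare (toMatrix c B).det := by
  have key : ∀ b c : Basis ι K V, IsSquare (toMatrix b B).det → IsSquare (toMatrix c B).det := by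
    rintro b c ⟨r, hr⟩
    refine ⟨(b.toMatrix c).det * r, ?_⟩
    rw [← toMatrix_mul_basis_toMatrix b, Matrix.det_mul, Matrix.det_mul, Matrix.det_transpose, hr]
    ring
  rw [← Matrix.det_submatrix_equiv_self (c.indexEquiv b).symm, ← toMatrix_reindex]
  exact ⟨key _ _, key _ _⟩

theorem IsOrthonormal.isSquare_det_toMatrix {b : Basis ι K V} (hb : B.IsOrthonormal b)
    (c : Basis κ K V) : IsSquare (toMatrix c B).det := by
  rw [← isSquare_det_toMatrix_iff b]
  refine ⟨1, ?_⟩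
  rw [mul_one, ← Matrix.det_one (n := ι)]
  congr 1
  ext i j
  rw [toMatrix_apply, isOrthonormal_iff_apply_eq_ite.mp hb, Matrix.one_apply]

end Discriminant

section OddCharacteristic

variable [Fintype K]

theorem exists_apply_self_eq_one (hK : ringChar K ≠ 2) [FiniteDimensional K V] (hB : B.IsSymm)
    (hnd : B.Nondegenerate) (h2 : 2 ≤ finrank K V) : ∃ u, B u u = 1 := by
  have : Invertible (2 : K) := invertibleOfNonzero (Ring.two_ne_zero hK)
  obtain ⟨v, hv⟩ := exists_orthogonal_basis (isSymm_iff.mp hB)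
  have hv0 := iIsOrtho.not_isOrtho_basis_self_of_nondegenerate hv hnd
  let i : Fin (finrank K V) := ⟨0, by omega⟩
  let j : Fin (finrank K V) := ⟨1, by omega⟩
  have hij : i ≠ j := by simp [i, j, Fin.ext_iff]
  obtain ⟨x, y, hxy⟩ := FiniteField.exists_mul_sq_add_mul_sq_eq_one hK (hv0 i) (hv0 j)
  refine ⟨x • v i + y • v j, ?_⟩
  simp only [map_add, map_smul, LinearMap.add_apply, LinearMap.smul_apply, smul_eq_mul,
    hv hij, hv hij.symm]
  linear_combination hxy

theorem exists_iIsOrtho_castSucc_apply_self_eq_one (hK : ringChar K ≠ 2) [FiniteDimensional K V]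
    (hB : B.IsSymm) (hnd : B.Nondegenerate) {n : ℕ} (hn : finrank K V = n + 1) :
    ∃ v : Fin (n + 1) → V, B.iIsOrtho v ∧ (∀ i : Fin n, B (v i.castSucc) (v i.castSucc) = 1) ∧
      B (v (Fin.last n)) (v (Fin.last n)) ≠ 0 := by
  induction n generalizing V with
  | zero =>
    have : Invertible (2 : K) := invertibleOfNonzero (Ring.two_ne_zero hK)
    obtain ⟨x, hx⟩ := finrank_pos_iff_exists_ne_zero.mp (hn ▸ Nat.one_pos : 0 < finrank K V)
    have hB0 : B ≠ 0 := fun h => hx (hnd.1 x fun y => by simp [h])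
    obtain ⟨u, hu⟩ := exists_bilinForm_self_ne_zero hB0 (isSymm_iff.mp hB)
    exact ⟨fun _ => u, fun i j h => (h (Subsingleton.elim (α := Fin 1) i j)).elim, Fin.elim0, hu⟩
  | succ n ih =>
    obtain ⟨u, huu⟩ := exists_apply_self_eq_one hK hB hnd (by omega)
    have hW := finrank_orthogonal_span_singleton_add_one (huu ▸ one_ne_zero : B u u ≠ 0)
    obtain ⟨w, hwo, hw1, hwl⟩ := ih (hB.restrict _)
      (restrict_nondegenerate_orthogonal_spanSingleton B hnd hB.isRefl (huu ▸ one_ne_zero))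
      (by omega)
    refine ⟨_, iIsOrtho_cons hB.isRefl u hwo, fun i => ?_, by simpa using hwl⟩
    induction i using Fin.cases
    · simpa using huu
    · simpa [← Fin.succ_castSucc] using hw1 _

theorem exists_isOrthonormal_of_isSquare_det (hK : ringChar K ≠ 2) [FiniteDimensional K V]
    (hB : B.IsSymm) (hnd : B.Nondegenerate) {ι : Type*} [Fintype ι] [DecidableEq ι]
    (b : Basis ι K V) (hb : IsSquare (toMatrix b B).det) :
    ∃ v : Fin (finrank K V) → V, B.IsOrthonormal v := by
  cases hn : finrank K V with
  | zero => exact ⟨Fin.elim0, fun i => i.elim0, fun i => i.elim0⟩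
  | succ n =>
    obtain ⟨v, hvo, hv1, hvl⟩ := exists_iIsOrtho_castSucc_apply_self_eq_one hK hB hnd hn
    have hv0 : ∀ i, B (v i) (v i) ≠ 0 := Fin.lastCases hvl fun i => by simp [hv1]
    let c : Basis (Fin (n + 1)) K V := basisOfLinearIndependentOfCardEqFinrank' v
      (linearIndependent_of_iIsOrtho hvo hv0) (by simp [hn])
    have hc : toMatrix c B = Matrix.diagonal fun i => B (v i) (v i) := by
      ext i j
      rcases eq_or_ne i j with rfl | hij
      · simp [c, toMatrix_apply]
      · simpa [c, toMatrix_apply, hij] using hvo hij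
    obtain ⟨r, hr⟩ := (isSquare_det_toMatrix_iff b c).mp hb
    rw [hc, Matrix.det_diagonal, Fin.prod_univ_castSucc] at hr
    simp only [hv1, Finset.prod_const_one, one_mul] at hr
    have hr0 : r ≠ 0 := by rintro rfl; exact hvl (by simpa using hr)
    let s : Fin (n + 1) → K := Fin.snoc (fun _ => 1) r⁻¹
    refine ⟨fun i => s i • v i, fun i j hij => ?_, fun i => ?_⟩
    · have : B (v i) (v j) = 0 := hvo hij
      simp [Function.onFun, this]
    · induction i using Fin.lastCases
      · simp [s, hr]
        field_simp
      · simp [s, hv1]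

end OddCharacteristic

end LinearMap.BilinForm

theorem Matrix.det_vandermonde_comp_perm {R : Type*} [CommRing R] {n : ℕ} (v : Fin n → R)
    (σ : Equiv.Perm (Fin n)) :
    (vandermonde (v ∘ σ)).det = Equiv.Perm.sign σ * (vandermonde v).det := by
  rw [← det_permute]
  rfl

namespace FiniteField

variable {K L : Type*} [Field K] [Field L] [Algebra K L]

theorem trace_mul_self_of_ringChar_eq_two [Finite L] (hK : ringChar K = 2) (x : L) :
    Algebra.trace K L (x * x) = Algebra.trace K L x ^ 2 := by
  have : CharP K 2 := ringChar.eq_iff.mp hK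
  have : CharP L 2 := charP_of_injective_algebraMap (algebraMap K L).injective 2
  have : ExpChar L 2 := ExpChar.prime Nat.prime_two
  apply (algebraMap K L).injective
  rw [map_pow, algebraMap_trace_eq_sum_pow, algebraMap_trace_eq_sum_pow, sum_pow_char]
  refine Finset.sum_congr rfl fun k _ => ?_
  rw [← sq, ← pow_mul, ← pow_mul, mul_comm]

variable [Fintype K]

local notation "q" => Fintype.card K

theorem pow_card_det_vandermonde {n : ℕ} [Fintype L] (hL : Fintype.card L = q ^ n) (α : L) :
    (Matrix.vandermonde fun k : Fin n => α ^ q ^ (k : ℕ)).det ^ q =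
      (-1) ^ (n - 1) * (Matrix.vandermonde fun k : Fin n => α ^ q ^ (k : ℕ)).det := by
  cases n with
  | zero => simp
  | succ n =>
    have hrot : (fun k : Fin (n + 1) => (α ^ q ^ (k : ℕ)) ^ q) =
        (fun k : Fin (n + 1) => α ^ q ^ (k : ℕ)) ∘ finRotate (n + 1) := by
      ext k
      rw [Function.comp_apply, finRotate_apply, Fin.val_add_one, ← pow_mul, ← pow_succ]
      split_ifs with hk
      · rw [hk, Fin.val_last, ← hL, pow_card, pow_zero, pow_one]
      · rfl
    let φ : L →+* L := (frobeniusAlgHom K L).toRingHom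
    have hφ : ∀ x, φ x = x ^ q := fun x => rfl
    rw [← hφ, RingHom.map_det, RingHom.mapMatrix_apply]
    have hmap : (Matrix.vandermonde fun k : Fin (n + 1) => α ^ q ^ (k : ℕ)).map φ =
        Matrix.vandermonde ((fun k : Fin (n + 1) => α ^ q ^ (k : ℕ)) ∘ finRotate (n + 1)) := by
      ext i j
      simp only [Matrix.map_apply, Matrix.vandermonde_apply, hφ, ← hrot]
      ring
    rw [hmap, Matrix.det_vandermonde_comp_perm, sign_finRotate]
    simp

theorem algebraMap_discr_powerBasis [Finite L] (pb : PowerBasis K L) :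
    algebraMap K L (Algebra.discr K pb.basis) =
      (Matrix.vandermonde fun k : Fin pb.dim => pb.gen ^ q ^ (k : ℕ)).det ^ 2 := by
  rw [Algebra.discr_def, RingHom.map_det, RingHom.mapMatrix_apply, sq]
  nth_rw 2 [← Matrix.det_transpose]
  rw [← Matrix.det_mul]
  congr 1
  ext i j
  rw [Matrix.map_apply, Algebra.traceMatrix_apply, Algebra.traceForm_apply,
    Matrix.vandermonde_transpose_mul_vandermonde, algebraMap_trace_eq_sum_pow, pb.finrank,
    ← Fin.sum_univ_eq_sum_range, Nat.card_eq_fintype_card]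
  refine Finset.sum_congr rfl fun k _ => ?_
  rw [PowerBasis.coe_basis, ← pow_add, ← pow_mul, ← pow_mul, mul_comm]

theorem mem_range_algebraMap_of_pow_card_eq [Finite L] {x : L} (hx : x ^ q = x) :
    x ∈ Set.range (algebraMap K L) := by
  have := Finite.of_injective _ (algebraMap K L).injective
  refine (IsGalois.mem_range_algebraMap_iff_fixed x).mpr fun f => ?_
  obtain ⟨n, rfl⟩ := (bijective_frobeniusAlgEquivOfAlgebraic_pow K L).2 f
  rw [AlgEquiv.coe_pow, coe_frobeniusAlgEquivOfAlgebraic]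
  exact Function.iterate_fixed hx _

theorem isSquare_discr_iff_odd_finrank [Finite L] (hK : ringChar K ≠ 2) {ι : Type*} [Fintype ι]
    [DecidableEq ι] (b : Basis ι K L) : IsSquare (Algebra.discr K b) ↔ Odd (finrank K L) := by
  have := Fintype.ofFinite L
  let pb := Field.powerBasisOfFiniteOfSeparable K L
  rw [Algebra.discr_def, Algebra.traceMatrix_of_basis,
    LinearMap.BilinForm.isSquare_det_toMatrix_iff b pb.basis, ← Algebra.traceMatrix_of_basis,
    ← Algebra.discr_def, pb.finrank]
  set δ := (Matrix.vandermonde fun k : Fin pb.dim => pb.gen ^ q ^ (k : ℕ)).det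
  have hδ : algebraMap K L (Algebra.discr K pb.basis) = δ ^ 2 := algebraMap_discr_powerBasis pb
  have hδq : δ ^ q = (-1) ^ (pb.dim - 1) * δ :=
    pow_card_det_vandermonde (by rw [card_eq_pow_finrank (K := K), pb.finrank]) _
  have hδ0 : δ ≠ 0 := by
    intro h
    refine Algebra.discr_not_zero_of_basis K pb.basis ((algebraMap K L).injective ?_)
    rw [hδ, h, map_zero, zero_pow two_ne_zero]
  have hdim : 0 < pb.dim := pb.finrank ▸ finrank_pos
  constructor
  · rintro ⟨c, hc⟩
    have hc' : algebraMap K L (Algebra.discr K pb.basis) = algebraMap K L c * algebraMap K L c := by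
      rw [hc, map_mul]
    have hcq : algebraMap K L c ^ q = algebraMap K L c := by rw [← map_pow, pow_card]
    have hfix : δ ^ q = δ := by
      have : (δ - algebraMap K L c) * (δ + algebraMap K L c) = 0 := by
        linear_combination hδ.symm.trans hc'
      rcases mul_eq_zero.mp this with h | h
      · rw [sub_eq_zero.mp h, hcq]
      · have hq : Odd q := Nat.odd_iff.mpr (odd_card_of_char_ne_two hK)
        rw [eq_neg_of_add_eq_zero_left h, hq.neg_pow, hcq]
    have h2 : (2 : L) ≠ 0 := by
      simpa only [map_ofNat, map_zero] using (algebraMap K L).injective.ne (Ring.two_ne_zero hK)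
    have hsign : (-1 : L) ^ (pb.dim - 1) = 1 :=
      mul_right_cancel₀ hδ0 (by rw [← hδq, hfix, one_mul])
    rw [neg_one_pow_eq_one_iff_even (fun h => h2 (by linear_combination -h))] at hsign
    obtain ⟨t, ht⟩ := hsign
    exact ⟨t, by omega⟩
  · intro hodd
    have hfix : δ ^ q = δ := by rw [hδq, (Nat.Odd.sub_odd hodd odd_one).neg_one_pow, one_mul]
    obtain ⟨c, hc⟩ := mem_range_algebraMap_of_pow_card_eq hfix
    exact ⟨c, (algebraMap K L).injective (by rw [hδ, map_mul, hc, sq])⟩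

end FiniteField

open LinearMap.BilinForm FiniteField

theorem stmt15_general (q m : ℕ)
    (K L : Type) [Field K] [Field L] [Fintype K] [Fintype L] [Algebra K L]
    (hcard : Fintype.card K = q) (hdim : Module.finrank K L = m) :
    (∃ B : Module.Basis (Fin m) K L,
        ∀ i j, Algebra.trace K L (B i * B j) = if i = j then 1 else 0) ↔
      (Even q ∨ (Odd q ∧ Odd m)) := by
  subst hcard hdim
  simp only [← Algebra.traceForm_apply, ← isOrthonormal_iff_apply_eq_ite]
  have hB := Algebra.traceForm_isSymm K (S := L)
  have hnd := traceForm_nondegenerate K L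
  rcases Nat.even_or_odd (Fintype.card K) with hq | hq
  · have hK : ringChar K = 2 := even_card_iff_char_two.mpr (Nat.even_iff.mp hq)
    have htr : Algebra.trace K L ≠ 0 := fun h => by
      simpa [h] using Algebra.trace_surjective K L 1
    obtain ⟨v, hv⟩ := exists_isOrthonormal_of_apply_self_eq_sq hB hnd
      (trace_mul_self_of_ringChar_eq_two hK) htr
    exact iff_of_true (hv.exists_basis (by simp)) (Or.inl hq)
  · have hK : ringChar K ≠ 2 := by
      rw [Ne, even_card_iff_char_two, ← Nat.even_iff, Nat.not_even_iff_odd]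
      exact hq
    let b := Module.finBasis K L
    have hdisc := isSquare_discr_iff_odd_finrank hK b
    rw [Algebra.discr_def, Algebra.traceMatrix_of_basis] at hdisc
    simp only [hq, Nat.not_even_iff_odd.mpr hq, true_and, false_or, ← hdisc]
    refine ⟨fun ⟨c, hc⟩ => hc.isSquare_det_toMatrix b, fun h => ?_⟩
    obtain ⟨v, hv⟩ := exists_isOrthonormal_of_isSquare_det hK hB hnd b h
    exact hv.exists_basis (by simp)

/-- Seroussi–Lempel: `F_{q^m}/F_q` admits a self-dual basis with
respect to the trace form if and only if `q` is even, or both `q` and `m` are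
odd. -/
theorem stmt15 (p e q m : ℕ) (hp : p.Prime) (he : 0 < e) (hq : q = p ^ e) (hm : 0 < m)
    (K L : Type) [Field K] [Field L] [Fintype K] [Fintype L] [Algebra K L]
    (hcard : Fintype.card K = q) (hdim : Module.finrank K L = m) :
    (∃ B : Module.Basis (Fin m) K L,
        ∀ i j, Algebra.trace K L (B i * B j) = if i = j then 1 else 0) ↔
      (Even q ∨ (Odd q ∧ Odd m)) :=
  stmt15_general q m K L hcard hdim
end
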